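/- In the İnönü–Wigner setting, for a map c : ℝ → g analytic at 0 the following are equivalent: (i) there exists a map c̃ : ℝ → g analytic at 0 with c(ε) = φ_ε(c̃(ε)) = π(c̃(ε)) + ε·π_n(c̃(ε)) for all ε in a neighbourhood of 0; (ii) c(0) ∈ h. Hence Γ(g)_φ = {c analytic at 0 : c(0) ∈ h}; in particular this set depends only on h and not on the chosen complement n = ker π. -/

import Mathlib

/-!
Writing `π_n := id - π`, any `c` splits as `c = π c + π_n c`. The `π`-part is already of the
required form. If `c 0 ∈ h` then `π_n c` is analytic and vanishes at `0`, so its slope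
`d := dslope (π_n ∘ c) 0` is analytic with `π_n (c ε) = ε • d ε`; the lift is then
`c̃ ε := π (c ε) + π_n (d ε)`. Conversely, `φ_0 = π` has range `h`.
-/

open scoped Topology

attribute [local instance high] NormedAddCommGroup.toAddCommGroup NormedSpace.toModule

theorem AnalyticAt.exists_analyticAt_eq_sub_smul {𝕜 E : Type*} [NontriviallyNormedField 𝕜]
    [NormedAddCommGroup E] [NormedSpace 𝕜 E] {f : 𝕜 → E} {a : 𝕜}
    (hf : AnalyticAt 𝕜 f a) (ha : f a = 0) :
    ∃ d : 𝕜 → E, AnalyticAt 𝕜 d a ∧ ∀ z, f z = (z - a) • d z := by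
  obtain ⟨p, hp⟩ := hf
  refine ⟨dslope f a, hp.has_fpower_series_dslope_fslope.analyticAt, fun z => ?_⟩
  rw [sub_smul_dslope, ha, sub_zero]

section Projection

variable {R M : Type*} [Ring R] [TopologicalSpace M] [AddCommGroup M] [Module R M]
  (π : M →L[R] M)

theorem ContinuousLinearMap.apply_sub_apply_of_idem (hπ : ∀ x, π (π x) = π x) (x : M) :
    π (x - π x) = 0 := by
  rw [map_sub, hπ, sub_self]

theorem ContinuousLinearMap.inonuWigner_apply_proj_add (hπ : ∀ x, π (π x) = π x) (ε : R)
    (x z : M) :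
    π (π x + (z - π z)) + ε • (π x + (z - π z) - π (π x + (z - π z))) =
      π x + ε • (z - π z) := by
  have hπy : π (π x + (z - π z)) = π x := by
    rw [map_add, hπ, π.apply_sub_apply_of_idem hπ, add_zero]
  rw [hπy, add_sub_cancel_left]

end Projection

theorem inonu_wigner_germ_characterisation_general
    {g : Type*} [NormedAddCommGroup g] [NormedSpace ℝ g]
    [LieRing g] [LieAlgebra ℝ g]
    (h : LieSubalgebra ℝ g)
    (π : g →L[ℝ] g)
    (hproj : ∀ x : g, π (π x) = π x)
    (hrange : ∀ x : g, π x ∈ h)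
    (hfix : ∀ x ∈ h, π x = x)
    (c : ℝ → g) (hc : AnalyticAt ℝ c 0) :
    let πn : g →L[ℝ] g := ContinuousLinearMap.id ℝ g - π
    ((∃ ct : ℝ → g, AnalyticAt ℝ ct 0 ∧
        ∀ᶠ ε in 𝓝 (0 : ℝ), c ε = π (ct ε) + ε • πn (ct ε)) ↔
      c 0 ∈ h) := by
  intro πn
  have hπn : ∀ x, πn x = x - π x := fun _ => rfl
  constructor
  · rintro ⟨ct, -, hev⟩
    simpa [hev.self_of_nhds] using hrange (ct 0)
  · intro hc0
    obtain ⟨d, hd, hcd⟩ : ∃ d : ℝ → g, AnalyticAt ℝ d 0 ∧ ∀ ε, πn (c ε) = (ε - 0) • d ε :=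
      ((πn.analyticAt (c 0)).comp hc).exists_analyticAt_eq_sub_smul (by simp [hπn, hfix _ hc0])
    refine ⟨fun ε => π (c ε) + πn (d ε), ?_, Filter.Eventually.of_forall fun ε => ?_⟩
    · exact ((π.analyticAt (c 0)).comp hc).add ((πn.analyticAt (d 0)).comp hd)
    · have hsplit : c ε = π (c ε) + ε • πn (d ε) :=
        calc c ε = π (c ε) + πn (c ε) := by rw [hπn, add_sub_cancel]
          _ = π (c ε) + πn (πn (c ε)) := by
            rw [hπn (c ε), hπn, π.apply_sub_apply_of_idem hproj, sub_zero]
          _ = π (c ε) + ε • πn (d ε) := by rw [hcd, sub_zero, map_smul]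
      simpa only [hπn] using
        hsplit.trans (π.inonuWigner_apply_proj_add hproj ε (c ε) (d ε)).symm

/-- In the İnönü–Wigner setting, for a map `c : ℝ → g`
analytic at `0` the following are equivalent: (i) `c` lies in `Γ(g)_φ`, i.e.
there is an analytic `c̃` with `c ε = π (c̃ ε) + ε • π_n (c̃ ε)` near `0`;
(ii) `c 0 ∈ h`. Hence `Γ(g)_φ = {c analytic at 0 : c 0 ∈ h}` depends only
on `h`. -/
theorem inonu_wigner_germ_characterisation
    {g : Type*} [NormedAddCommGroup g] [NormedSpace ℝ g] [CompleteSpace g]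
    [LieRing g] [LieAlgebra ℝ g]
    (hbracket : Continuous fun p : g × g => ⁅p.1, p.2⁆)
    (h : LieSubalgebra ℝ g)
    (π : g →L[ℝ] g)
    (hproj : ∀ x : g, π (π x) = π x)
    (hrange : ∀ x : g, π x ∈ h)
    (hfix : ∀ x ∈ h, π x = x)
    (c : ℝ → g) (hc : AnalyticAt ℝ c 0) :
    let πn : g →L[ℝ] g := ContinuousLinearMap.id ℝ g - π
    ((∃ ct : ℝ → g, AnalyticAt ℝ ct 0 ∧
        ∀ᶠ ε in 𝓝 (0 : ℝ), c ε = π (ct ε) + ε • πn (ct ε)) ↔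
      c 0 ∈ h) :=
  inonu_wigner_germ_characterisation_general h π hproj hrange hfix c hc
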